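/- If X is a locally compact Hausdorff space, then |X| ≤ wL(X)^(ψ(X)). -/

import Mathlib

open Cardinal Set

universe u

section Defs
variable (X : Type u) [TopologicalSpace X]

/-- An open cover of the whole space. -/
def IsOpenCover (𝒰 : Set (Set X)) : Prop := (∀ U ∈ 𝒰, IsOpen U) ∧ ⋃₀ 𝒰 = Set.univ

/-- The cellularity: supremum of cardinalities of pairwise disjoint families of nonempty
open sets, plus `ℵ₀`. -/
noncomputable def cellularity : Cardinal.{u} :=
  max ℵ₀ (⨆ 𝒰 : {𝒰 : Set (Set X) // (∀ U ∈ 𝒰, IsOpen U ∧ U.Nonempty) ∧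
    𝒰.PairwiseDisjoint id}, #𝒰.1)

/-- The weak Lindelöf degree. -/
noncomputable def wLdeg : Cardinal.{u} :=
  sInf {κ | ℵ₀ ≤ κ ∧ ∀ 𝒰 : Set (Set X), IsOpenCover X 𝒰 →
    ∃ 𝒱 ⊆ 𝒰, #𝒱 ≤ κ ∧ Dense (⋃₀ 𝒱)}

/-- The tightness. -/
noncomputable def tightness : Cardinal.{u} :=
  sInf {κ | ℵ₀ ≤ κ ∧ ∀ (A : Set X) (x : X), x ∈ closure A →
    ∃ B ⊆ A, #B ≤ κ ∧ x ∈ closure B}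

/-- The π-character. -/
noncomputable def piCharacter : Cardinal.{u} :=
  sInf {κ | ℵ₀ ≤ κ ∧ ∀ x : X, ∃ 𝒬 : Set (Set X), #𝒬 ≤ κ ∧
    (∀ P ∈ 𝒬, IsOpen P ∧ P.Nonempty) ∧
    ∀ U : Set X, IsOpen U → x ∈ U → ∃ P ∈ 𝒬, P ⊆ U}

/-- The pseudocharacter. -/
noncomputable def pseudoChar : Cardinal.{u} :=
  sInf {κ | ℵ₀ ≤ κ ∧ ∀ x : X, ∃ 𝒱 : Set (Set X), #𝒱 ≤ κ ∧
    (∀ V ∈ 𝒱, IsOpen V ∧ x ∈ V) ∧ ⋂₀ 𝒱 = {x}}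

/-- The closed pseudocharacter. -/
noncomputable def closedPseudoChar : Cardinal.{u} :=
  sInf {κ | ℵ₀ ≤ κ ∧ ∀ x : X, ∃ 𝒱 : Set (Set X), #𝒱 ≤ κ ∧
    (∀ V ∈ 𝒱, IsOpen V ∧ x ∈ V) ∧ (⋂ V ∈ 𝒱, closure V) = {x}}

/-- The density. -/
noncomputable def densityCard : Cardinal.{u} :=
  sInf {κ | ℵ₀ ≤ κ ∧ ∃ D : Set X, #D ≤ κ ∧ Dense D}

/-- The star of a set `A` with respect to a family `𝒰`. -/
def st (A : Set X) (𝒰 : Set (Set X)) : Set X := ⋃₀ {U | U ∈ 𝒰 ∧ (A ∩ U).Nonempty}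

/-- The θ-closure of a set. -/
def thetaClosure (A : Set X) : Set X :=
  {x | ∀ U : Set X, IsOpen U → x ∈ U → (closure U ∩ A).Nonempty}

/-- The θ-density. -/
noncomputable def thetaDensityCard : Cardinal.{u} :=
  sInf {κ | ℵ₀ ≤ κ ∧ ∃ D : Set X, #D ≤ κ ∧ thetaClosure X D = Set.univ}

/-- A discrete family of sets: each point has a neighborhood meeting at most one member. -/
def IsDiscreteFamily (𝒰 : Set (Set X)) : Prop :=
  ∀ x : X, ∃ V : Set X, IsOpen V ∧ x ∈ V ∧ {U | U ∈ 𝒰 ∧ (V ∩ U).Nonempty}.Subsingleton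

/-- Countable discrete cellularity. -/
def CDC : Prop :=
  ∀ 𝒰 : Set (Set X), (∀ U ∈ 𝒰, IsOpen U ∧ U.Nonempty) → IsDiscreteFamily X 𝒰 → 𝒰.Countable

/-- Star-cdc: every open cover has a cdc subspace whose star covers the space. -/
def StarCDC : Prop :=
  ∀ 𝒰 : Set (Set X), IsOpenCover X 𝒰 → ∃ Y : Set X, CDC ↥Y ∧ st X Y 𝒰 = Set.univ

/-- H-closed space: every open cover has a finite subfamily with dense union. -/
def IsHClosedSpace : Prop :=
  ∀ 𝒰 : Set (Set X), IsOpenCover X 𝒰 → ∃ 𝒱 ⊆ 𝒰, 𝒱.Finite ∧ Dense (⋃₀ 𝒱)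

/-- Countable cellularity (ccc). -/
def CCCSpace : Prop :=
  ∀ 𝒰 : Set (Set X), (∀ U ∈ 𝒰, IsOpen U ∧ U.Nonempty) → 𝒰.PairwiseDisjoint id → 𝒰.Countable

/-- Weakly Lindelöf space. -/
def WeaklyLindelof : Prop :=
  ∀ 𝒰 : Set (Set X), IsOpenCover X 𝒰 → ∃ 𝒱 ⊆ 𝒰, 𝒱.Countable ∧ Dense (⋃₀ 𝒱)

/-- Almost Lindelöf space. -/
def AlmostLindelof : Prop :=
  ∀ 𝒰 : Set (Set X), IsOpenCover X 𝒰 → ∃ 𝒱 ⊆ 𝒰, 𝒱.Countable ∧ (⋃ V ∈ 𝒱, closure V) = Set.univ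

/-- A π-base: a family of nonempty open sets such that every nonempty open set contains one. -/
def IsPiBase (ℬ : Set (Set X)) : Prop :=
  (∀ B ∈ ℬ, IsOpen B ∧ B.Nonempty) ∧
  ∀ U : Set X, IsOpen U → U.Nonempty → ∃ B ∈ ℬ, B ⊆ U

/-- Power homogeneous: some power of `X` is homogeneous. -/
def PowerHomogeneous : Prop :=
  ∃ ι : Type u, ∀ x y : ι → X, ∃ h : (ι → X) ≃ₜ (ι → X), h x = y

/-- A strong `G_δ`-diagonal of rank 2. -/
def HasStrongRank2Diagonal : Prop :=
  ∃ 𝒰 : ℕ → Set (Set X), (∀ n, IsOpenCover X (𝒰 n)) ∧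
    ∀ x : X, (⋂ n, closure (st X (st X {x} (𝒰 n)) (𝒰 n))) = {x}

/-- A `G_δ`-diagonal of rank 2. -/
def HasRank2Diagonal : Prop :=
  ∃ 𝒰 : ℕ → Set (Set X), (∀ n, IsOpenCover X (𝒰 n)) ∧
    ∀ x : X, (⋂ n, st X (st X {x} (𝒰 n)) (𝒰 n)) = {x}

/-- A `G_δ`-diagonal of rank 3. -/
def HasRank3Diagonal : Prop :=
  ∃ 𝒰 : ℕ → Set (Set X), (∀ n, IsOpenCover X (𝒰 n)) ∧
    ∀ x : X, (⋂ n, st X (st X (st X {x} (𝒰 n)) (𝒰 n)) (𝒰 n)) = {x}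

/-- Basically disconnected: the closure of every cozero set is open. -/
def BasicallyDisconnected : Prop :=
  ∀ f : C(X, ℝ), IsOpen (closure {x | f x ≠ 0})

end Defs

/-!
In a locally compact Hausdorff space a pseudobase of size `ψ = ψ(X)` at a point refines, by
compactness, to a neighbourhood base of size `ψ`. Arhangel'skii's closing-off argument then bounds
every compact subset by `2 ^ ψ`. Covering `X` by open sets with compact closure, `wL(X)` of them
have a dense union `D` of size at most `wL(X) * 2 ^ ψ`, and every point of `closure D = X` is
determined by a `ψ`-indexed net in `D`, so `|X| ≤ |D| ^ ψ ≤ wL(X) ^ ψ`.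
-/

open Filter Topology

theorem Cardinal.mk_iUnion_le_mul {α ι : Type u} {f : ι → Set α} {c : Cardinal.{u}}
    (h : ∀ i, #(f i) ≤ c) : #(⋃ i, f i) ≤ #ι * c :=
  (mk_iUnion_le f).trans (mul_le_mul_right (ciSup_le' h) _)

theorem Cardinal.mul_two_power_power_le {κ μ : Cardinal.{u}} (hκ : 2 ≤ κ) (hμ : ℵ₀ ≤ μ) :
    (κ * 2 ^ μ) ^ μ ≤ κ ^ μ :=
  calc (κ * 2 ^ μ) ^ μ = κ ^ μ * 2 ^ μ := by rw [mul_power, ← power_mul, mul_eq_self hμ]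
    _ ≤ κ ^ μ * κ ^ μ := mul_le_mul_right (power_le_power_right hκ) _
    _ = κ ^ μ := mul_eq_self (hμ.trans ((cantor μ).le.trans (power_le_power_right hκ)))

theorem Cardinal.exists_forall_lt_of_mk_le_toType_ord_succ {κ : Cardinal.{u}} (hκ : ℵ₀ ≤ κ)
    {s : Set (Order.succ κ).ord.ToType} (hs : #s ≤ κ) : ∃ j, ∀ i ∈ s, i < j := by
  have hcof : #s < Order.cof (Order.succ κ).ord.ToType := by
    rw [Ordinal.cof_toType, (isRegular_succ hκ).cof_ord]
    exact hs.trans_lt (Order.lt_succ_of_not_isMax (not_isMax κ))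
  by_contra! h
  exact (Order.cof_le fun j => h j).not_gt hcof

section ClosingOff
variable {α I : Type u} [LinearOrder I] [WellFoundedLT I] {κ : Cardinal.{u}} {g : Set α → Set α}

variable (κ g) in
noncomputable def closingOffStage : I → Set α :=
  wellFounded_lt.fix fun i stage => ⋃ j : Iio i,
    (stage j j.2 ∪ ⋃ B : {B : Set α // B ⊆ stage j j.2 ∧ #B ≤ κ}, g B)

variable (κ g) in
theorem closingOffStage_eq (i : I) :
    closingOffStage κ g i = ⋃ j : Iio i, (closingOffStage κ g j.1 ∪
      ⋃ B : {B : Set α // B ⊆ closingOffStage κ g j.1 ∧ #B ≤ κ}, g B) := by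
  rw [closingOffStage, WellFounded.fix_eq]

theorem closingOffStage_mono : Monotone (closingOffStage κ g : I → Set α) := by
  intro j i hij
  rcases hij.eq_or_lt with rfl | hij
  · rfl
  rw [closingOffStage_eq κ g i]
  exact subset_iUnion_of_subset ⟨j, hij⟩ subset_union_left

theorem image_subset_closingOffStage {i j : I} (hij : j < i) {B : Set α}
    (hB : B ⊆ closingOffStage κ g j) (hBκ : #B ≤ κ) : g B ⊆ closingOffStage κ g i := by
  rw [closingOffStage_eq κ g i]
  refine subset_iUnion_of_subset (⟨j, hij⟩ : Iio i) (subset_union_of_subset_right ?_ _)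
  exact subset_iUnion_of_subset ⟨B, hB, hBκ⟩ subset_rfl

theorem mk_closingOffStage_le {μ : Cardinal.{u}} (hμ : ℵ₀ ≤ μ) (hμκ : μ ^ κ = μ)
    (hI : ∀ i : I, #(Iio i) ≤ μ) (hg : ∀ B : Set α, #B ≤ κ → #(g B) ≤ μ) (i : I) :
    #(closingOffStage κ g i) ≤ μ := by
  induction i using WellFoundedLT.induction with
  | _ i ih =>
  rw [closingOffStage_eq]
  have hstep : ∀ j : Iio i, #(closingOffStage κ g j.1 ∪
      ⋃ B : {B : Set α // B ⊆ closingOffStage κ g j.1 ∧ #B ≤ κ}, g B : Set α) ≤ μ := fun j =>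
    calc _ ≤ μ + #{B : Set α // B ⊆ closingOffStage κ g j.1 ∧ #B ≤ κ} * μ :=
          (mk_union_le _ _).trans (add_le_add (ih j j.2) (mk_iUnion_le_mul fun B => hg B B.2.2))
      _ ≤ μ + μ ^ κ * μ := by
          gcongr
          exact (mk_bounded_subset_le _ κ).trans (power_le_power_right (max_le (ih j j.2) hμ))
      _ = μ := by rw [hμκ, mul_eq_self hμ, add_eq_self hμ]
  calc _ ≤ #(Iio i) * μ := mk_iUnion_le_mul hstep
    _ ≤ μ * μ := mul_le_mul_left (hI i) _
    _ = μ := mul_eq_self hμ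

end ClosingOff

theorem exists_mk_le_forall_image_subset {α : Type u} {κ μ : Cardinal.{u}} (hκ : ℵ₀ ≤ κ)
    (hκμ : κ < μ) (hμκ : μ ^ κ = μ) (g : Set α → Set α)
    (hg : ∀ B : Set α, #B ≤ κ → #(g B) ≤ μ) :
    ∃ M : Set α, #M ≤ μ ∧ ∀ B ⊆ M, #B ≤ κ → g B ⊆ M := by
  -- Initial segments of `I` have size `≤ κ`, and by regularity of `κ⁺` every `κ`-sized subset
  -- of `I` is bounded, so a `κ`-sized subset of `M` already lies in a single stage.
  let I := (Order.succ κ).ord.ToType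
  have hμ : ℵ₀ ≤ μ := hκ.trans hκμ.le
  have hIio : ∀ i : I, #(Iio i) ≤ μ := fun i =>
    (Order.lt_succ_iff.1 (by simpa [I] using mk_Iio_lt i (by simp [I]))).trans hκμ.le
  refine ⟨⋃ i : I, closingOffStage κ g i, ?_, fun B hB hBκ => ?_⟩
  · calc _ ≤ #I * μ := mk_iUnion_le_mul (mk_closingOffStage_le hμ hμκ hIio hg)
      _ ≤ μ * μ := mul_le_mul_left (by simpa [I] using Order.succ_le_of_lt hκμ) _
      _ = μ := mul_eq_self hμ
  choose stage hstage using fun b : B => mem_iUnion.1 (hB b.2)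
  obtain ⟨j, hj⟩ := exists_forall_lt_of_mk_le_toType_ord_succ hκ (mk_range_le.trans hBκ)
  obtain ⟨k, hk⟩ := exists_forall_lt_of_mk_le_toType_ord_succ hκ
    ((mk_singleton j).trans_le (one_le_aleph0.trans hκ))
  have hBj : B ⊆ closingOffStage κ g j := fun b hb =>
    closingOffStage_mono (hj _ (mem_range_self ⟨b, hb⟩)).le (hstage ⟨b, hb⟩)
  exact (image_subset_closingOffStage (hk j rfl) hBj hBκ).trans (subset_iUnion _ k)

theorem mk_closure_le_power {X ι : Type u} [TopologicalSpace X] [T2Space X]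
    {s : X → ι → Set X} (hs : ∀ x, (𝓝 x).HasBasis (fun _ => True) (s x)) (A : Set X) :
    #(closure A) ≤ #A ^ (#ι * #ι) := by
  have hmeet : ∀ (x : closure A) (p : ι × ι), ∃ a : A, (a : X) ∈ s x p.1 ∩ s x p.2 := by
    rintro ⟨x, hx⟩ ⟨i, j⟩
    obtain ⟨a, ha, hai⟩ := mem_closure_iff_nhds.1 hx _
      (inter_mem ((hs x).mem_of_mem trivial) ((hs x).mem_of_mem trivial))
    exact ⟨⟨a, hai⟩, ha⟩
  -- Indexing the net by pairs lets one coordinate lie in a basic neighbourhood of `x` and in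
  -- one of `y` at the same time, which is impossible when these are disjoint.
  choose net hnet using hmeet
  have hinj : Function.Injective net := by
    intro x y hxy
    by_contra hne
    obtain ⟨i, -, j, -, hij⟩ :=
      ((hs x).disjoint_iff (hs y)).1 (disjoint_nhds_nhds.2 (Subtype.coe_injective.ne hne))
    have hx := (hnet x (i, j)).1
    have hy := (hnet y (i, j)).2
    rw [hxy] at hx
    exact hij.ne_of_mem hx hy rfl
  simpa [power_def, mk_prod] using mk_le_of_injective hinj

theorem exists_nhds_hasBasis_finset_of_iInter_eq_singleton {X ι : Type u} [TopologicalSpace X]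
    [T2Space X] [LocallyCompactSpace X] {x : X} {V : ι → Set X} (hV : ∀ i, V i ∈ 𝓝 x)
    (hVx : ⋂ i, V i = {x}) : ∃ s : Finset ι → Set X, (𝓝 x).HasBasis (fun _ => True) s := by
  obtain ⟨K, hK, hKx⟩ := exists_compact_mem_nhds x
  choose W hWx hWc hWV using fun i => exists_mem_nhds_isClosed_subset (hV i)
  refine ⟨fun F => K ∩ ⋂ i ∈ F, W i, ⟨fun U => ⟨fun hU => ?_, ?_⟩⟩⟩
  · classical
    have hanti : Antitone fun F : Finset ι => K ∩ ⋂ i ∈ F, W i :=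
      fun F G hFG => inter_subset_inter_right _ (biInter_subset_biInter_left hFG)
    have hcore : ∀ y ∈ ⋂ F : Finset ι, K ∩ ⋂ i ∈ F, W i, U ∈ 𝓝 y := by
      intro y hy
      have : y ∈ ⋂ i, V i :=
        mem_iInter.2 fun i => hWV i (by simpa using (mem_iInter.1 hy {i}).2)
      rw [hVx, mem_singleton_iff] at this
      exact this ▸ hU
    obtain ⟨F, hF⟩ := exists_subset_nhds_of_isCompact' hanti.directed_ge
      (fun F => hK.inter_right (isClosed_biInter fun i _ => hWc i))
      (fun F => hK.isClosed.inter (isClosed_biInter fun i _ => hWc i)) hcore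
    exact ⟨F, trivial, hF⟩
  · rintro ⟨F, -, hF⟩
    exact mem_of_superset (inter_mem hKx ((biInter_finset_mem F).2 fun i _ => hWx i)) hF

theorem isClosed_of_forall_closure_subset {X ι : Type u} [TopologicalSpace X]
    {s : X → ι → Set X} (hs : ∀ x, (𝓝 x).HasBasis (fun _ => True) (s x)) {M : Set X}
    (hM : ∀ B ⊆ M, #B ≤ #ι → closure B ⊆ M) : IsClosed M := by
  refine closure_subset_iff_isClosed.1 fun x hx => ?_
  choose a haM has using fun i => (mem_closure_iff_nhds_basis (hs x)).1 hx i trivial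
  have hxa : x ∈ closure (range a) :=
    (mem_closure_iff_nhds_basis (hs x)).2 fun i _ => ⟨a i, mem_range_self i, has i⟩
  exact hM _ (range_subset_iff.2 haM) mk_range_le hxa

theorem eq_univ_of_isClosed_of_forall_cover_eq_univ {K ι : Type u} [TopologicalSpace K]
    [CompactSpace K] [T1Space K] [Nonempty ι] {s : K → ι → Set K}
    (hs : ∀ x, (𝓝 x).HasBasis (fun _ => True) (s x)) {M : Set K} (hMc : IsClosed M)
    (hM : ∀ (t : Finset K) (f : K → ι), ↑t ⊆ M → M ⊆ ⋃ b ∈ t, s b (f b) →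
      ⋃ b ∈ t, s b (f b) = Set.univ) : M = Set.univ := by
  by_contra hne
  obtain ⟨x, hxM⟩ := (ne_univ_iff_exists_notMem M).1 hne
  have hsep : ∀ m : K, ∃ i, m ≠ x → x ∉ s m i := fun m => by
    by_cases hm : m = x
    · exact ⟨Classical.arbitrary ι, fun h => (h hm).elim⟩
    · obtain ⟨i, -, hi⟩ := (hs m).mem_iff.1 (compl_singleton_mem_nhds hm)
      exact ⟨i, fun _ hx => hi hx rfl⟩
  choose f hf using hsep
  obtain ⟨t, htM, hcover⟩ := hMc.isCompact.elim_nhds_subcover (fun m => s m (f m))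
    fun m _ => (hs m).mem_of_mem trivial
  have hx : x ∈ ⋃ b ∈ t, s b (f b) := hM t f htM hcover ▸ mem_univ x
  obtain ⟨b, hbt, hxb⟩ := mem_iUnion₂.1 hx
  exact hf b (fun hbx => hxM (hbx ▸ htM b hbt)) hxb

theorem CompactSpace.mk_le_two_power {K ι : Type u} [TopologicalSpace K] [CompactSpace K]
    [T2Space K] (hι : ℵ₀ ≤ #ι) {s : K → ι → Set K}
    (hs : ∀ x, (𝓝 x).HasBasis (fun _ => True) (s x)) : #K ≤ 2 ^ #ι := by
  cases isEmpty_or_nonempty K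
  · simp
  have : Nonempty ι := mk_ne_zero_iff.1 (aleph0_pos.trans_le hι).ne'
  -- `pick U ∉ U` unless `U = univ`; closing off under `g` makes `M` closed, and makes every
  -- union of basic sets centred in `M` that misses a point of `K` also miss a point of `M`.
  let pick : Set K → K := fun U => Classical.epsilon (· ∉ U)
  let g : Set K → Set K := fun B =>
    closure B ∪ range fun f : B → ι => pick (⋃ b : B, s b (f b))
  have hg : ∀ B : Set K, #B ≤ #ι → #(g B) ≤ 2 ^ #ι := by
    intro B hB
    have hclosure : #(closure B) ≤ 2 ^ #ι :=
      calc _ ≤ #B ^ (#ι * #ι) := mk_closure_le_power hs B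
        _ ≤ #ι ^ #ι := by rw [mul_eq_self hι]; exact power_le_power_right hB
        _ = 2 ^ #ι := power_self_eq hι
    have hpicks : #(range fun f : B → ι => pick (⋃ b : B, s b (f b))) ≤ 2 ^ #ι :=
      calc _ ≤ #ι ^ #B := mk_range_le
        _ ≤ #ι ^ #ι := power_le_power_left (aleph0_pos.trans_le hι).ne' hB
        _ = 2 ^ #ι := power_self_eq hι
    calc _ ≤ 2 ^ #ι + 2 ^ #ι := (mk_union_le _ _).trans (add_le_add hclosure hpicks)
      _ = 2 ^ #ι := add_eq_self (hι.trans (cantor _).le)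
  obtain ⟨M, hMcard, hM⟩ := exists_mk_le_forall_image_subset hι (cantor _)
    (by rw [← power_mul, mul_eq_self hι]) g hg
  have hMclosed : IsClosed M :=
    isClosed_of_forall_closure_subset hs fun B hB hBι => subset_union_left.trans (hM B hB hBι)
  have hMuniv : M = Set.univ := by
    refine eq_univ_of_isClosed_of_forall_cover_eq_univ hs hMclosed fun t f htM hcover => ?_
    by_contra hne
    have hpick : pick (⋃ b ∈ t, s b (f b)) ∉ ⋃ b ∈ t, s b (f b) :=
      Classical.epsilon_spec ((ne_univ_iff_exists_notMem _).1 hne)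
    refine hpick (hcover (hM t htM (t.finite_toSet.lt_aleph0.le.trans hι) ?_))
    exact subset_union_right ⟨fun b => f b, by simp only [iUnion_coe_set, Finset.mem_coe]⟩
  calc #K = #M := by rw [hMuniv, mk_univ]
    _ ≤ 2 ^ #ι := hMcard

theorem IsCompact.mk_le_two_power {X ι : Type u} [TopologicalSpace X] [T2Space X]
    (hι : ℵ₀ ≤ #ι) {s : X → ι → Set X} (hs : ∀ x, (𝓝 x).HasBasis (fun _ => True) (s x))
    {K : Set X} (hK : IsCompact K) : #K ≤ 2 ^ #ι := by
  have : CompactSpace K := isCompact_iff_compactSpace.1 hK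
  exact CompactSpace.mk_le_two_power hι fun x : K => by
    simpa only [nhds_subtype] using (hs x).comap ((↑) : K → X)

section CardinalFunctions
variable (X : Type u) [TopologicalSpace X]

theorem wLdeg_spec : ℵ₀ ≤ wLdeg X ∧ ∀ 𝒰 : Set (Set X), IsOpenCover X 𝒰 →
    ∃ 𝒱 ⊆ 𝒰, #𝒱 ≤ wLdeg X ∧ Dense (⋃₀ 𝒱) := by
  refine csInf_mem (s := {κ | ℵ₀ ≤ κ ∧ _}) ⟨max ℵ₀ #(Set X), le_max_left _ _, fun 𝒰 h𝒰 => ?_⟩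
  refine ⟨𝒰, subset_rfl, (mk_set_le _).trans (le_max_right _ _), ?_⟩
  rw [h𝒰.2]
  exact dense_univ

theorem pseudoChar_spec [T1Space X] : ℵ₀ ≤ pseudoChar X ∧ ∀ x : X, ∃ 𝒱 : Set (Set X),
    #𝒱 ≤ pseudoChar X ∧ (∀ V ∈ 𝒱, IsOpen V ∧ x ∈ V) ∧ ⋂₀ 𝒱 = {x} := by
  refine csInf_mem (s := {κ | ℵ₀ ≤ κ ∧ _}) ⟨max ℵ₀ #(Set X), le_max_left _ _, fun x => ?_⟩
  refine ⟨{U | IsOpen U ∧ x ∈ U}, (mk_set_le _).trans (le_max_right _ _), fun V hV => hV, ?_⟩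
  refine Subset.antisymm (fun y hy => ?_) (singleton_subset_iff.2 fun U hU => hU.2)
  by_contra hne
  exact hy {y}ᶜ ⟨isOpen_compl_singleton, Ne.symm hne⟩ rfl

variable {X}

theorem exists_iInter_eq_singleton_of_pseudoChar [T1Space X] (x : X) :
    ∃ V : (pseudoChar X).out → Set X, (∀ i, V i ∈ 𝓝 x) ∧ ⋂ i, V i = {x} := by
  obtain ⟨hψ, hψx⟩ := pseudoChar_spec X
  obtain ⟨𝒱, h𝒱card, h𝒱, h𝒱x⟩ := hψx x
  set 𝒱' : Set (Set X) := insert Set.univ 𝒱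
  have hcard : #𝒱' ≤ #(pseudoChar X).out := by
    rw [mk_out]
    exact (mk_insert_le).trans ((add_le_add_left h𝒱card 1).trans_eq (add_one_eq hψ))
  obtain ⟨e⟩ := le_def _ _ |>.1 hcard
  have : Nonempty 𝒱' := ⟨⟨Set.univ, mem_insert _ _⟩⟩
  refine ⟨fun i => ((Function.invFun e i : 𝒱') : Set X), fun i => ?_, ?_⟩
  · rcases (Function.invFun e i).2 with hV | hV
    · simp only [hV, univ_mem]
    · exact (h𝒱 _ hV).1.mem_nhds (h𝒱 _ hV).2
  · rw [(Function.invFun_surjective e.injective).iInter_comp (fun V => (V : Set X)),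
      ← sInter_eq_iInter, sInter_insert, univ_inter, h𝒱x]

theorem exists_nhds_hasBasis_of_pseudoChar [T2Space X] [LocallyCompactSpace X] :
    ∃ ι : Type u, #ι = pseudoChar X ∧
      ∃ s : X → ι → Set X, ∀ x, (𝓝 x).HasBasis (fun _ => True) (s x) := by
  have : Infinite (pseudoChar X).out :=
    infinite_iff.2 (by rw [mk_out]; exact (pseudoChar_spec X).1)
  refine ⟨Finset (pseudoChar X).out, by rw [mk_finset_of_infinite, mk_out], ?_⟩
  choose V hV hVx using exists_iInter_eq_singleton_of_pseudoChar (X := X)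
  choose s hs using fun x => exists_nhds_hasBasis_finset_of_iInter_eq_singleton (hV x) (hVx x)
  exact ⟨s, hs⟩

end CardinalFunctions

theorem stmt12 (X : Type u) [TopologicalSpace X] [T2Space X] [LocallyCompactSpace X] :
    #X ≤ wLdeg X ^ pseudoChar X := by
  obtain ⟨ι, hι, s, hs⟩ := exists_nhds_hasBasis_of_pseudoChar (X := X)
  have hψ : ℵ₀ ≤ #ι := hι ▸ (pseudoChar_spec X).1
  obtain ⟨hκ, hwL⟩ := wLdeg_spec X
  have hcover : IsOpenCover X {U | IsOpen U ∧ IsCompact (closure U)} := by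
    refine ⟨fun U hU => hU.1, eq_univ_of_forall fun x => ?_⟩
    obtain ⟨U, hU, hxU, hUc⟩ := exists_isOpen_mem_isCompact_closure x
    exact ⟨U, ⟨hU, hUc⟩, hxU⟩
  obtain ⟨𝒱, h𝒱, h𝒱card, h𝒱dense⟩ := hwL _ hcover
  have hD : #(⋃₀ 𝒱) ≤ wLdeg X * 2 ^ #ι := (mk_sUnion_le 𝒱).trans <|
    mul_le_mul' h𝒱card <| ciSup_le' fun V => (mk_le_mk_of_subset subset_closure).trans <|
      (h𝒱 V.2).2.mk_le_two_power hψ hs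
  calc #X = #(closure (⋃₀ 𝒱)) := by rw [h𝒱dense.closure_eq, mk_univ]
    _ ≤ #(⋃₀ 𝒱) ^ (#ι * #ι) := mk_closure_le_power hs _
    _ ≤ (wLdeg X * 2 ^ #ι) ^ #ι := by rw [mul_eq_self hψ]; exact power_le_power_right hD
    _ ≤ wLdeg X ^ pseudoChar X := hι ▸ mul_two_power_power_le (ofNat_le_aleph0.trans hκ) hψ
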